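/- There is no smooth complete fan Σ' in ℤ^4 that is Fano together with a cone τ of Σ' of dimension at least 2 such that Σ_Y is the star subdivision of Σ' at τ. (Equivalently: the toric Fano 4-fold Y associated to Σ_Y does not admit any equivariant blow-down to a nonsingular toric Fano 4-fold.) -/

import Mathlib

/-! ## Basic setup: cones and smooth complete fans in `ℤ^n` with ambient space `ℚ^n` -/

/-- The ambient rational vector space `ℚ^n`. -/
abbrev Vec (n : ℕ) := Fin n → ℚ

/-- The lattice `ℤ^n`. -/
abbrev LVec (n : ℕ) := Fin n → ℤ

/-- The natural inclusion `ℤ^n → ℚ^n`. -/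
def toQ {n : ℕ} (v : LVec n) : Vec n := fun i => (v i : ℚ)

/-- The cone generated by a set `S ⊆ ℚ^n`: all nonnegative rational linear
combinations of elements of `S`. -/
def coneGen {n : ℕ} (S : Set (Vec n)) : Set (Vec n) :=
  {x | ∃ (T : Finset (Vec n)) (c : Vec n → ℚ),
    ↑T ⊆ S ∧ (∀ s, 0 ≤ c s) ∧ x = ∑ s ∈ T, c s • s}

/-- `G` is a face of the cone `σ`: it is cut out on `σ` by a linear form
which is nonnegative on `σ`. -/
def IsFaceOf {n : ℕ} (G σ : Set (Vec n)) : Prop :=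
  ∃ u : Vec n →ₗ[ℚ] ℚ, (∀ x ∈ σ, 0 ≤ u x) ∧ G = {x ∈ σ | u x = 0}

/-- A smooth complete fan in `ℤ^n`: a finite collection of cones in `ℚ^n`, each
generated by (the images of) a subset of some `ℤ`-basis of `ℤ^n`, closed under
taking faces, such that the intersection of two cones is a face of each, and whose
union is all of `ℚ^n`. -/
structure IsSmoothCompleteFan {n : ℕ} (F : Set (Set (Vec n))) : Prop where
  finite : F.Finite
  smooth : ∀ σ ∈ F, ∃ (b : Module.Basis (Fin n) ℤ (LVec n)) (I : Finset (Fin n)),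
    σ = coneGen (toQ '' (⇑b '' ↑I))
  faces : ∀ σ ∈ F, ∀ G, IsFaceOf G σ → G ∈ F
  inter : ∀ σ ∈ F, ∀ τ ∈ F, IsFaceOf (σ ∩ τ) σ ∧ IsFaceOf (σ ∩ τ) τ
  covers : ⋃₀ F = Set.univ

/-- A primitive lattice vector. -/
def IsPrimitive {n : ℕ} (v : LVec n) : Prop :=
  v ≠ 0 ∧ ∀ (k : ℤ) (w : LVec n), v = k • w → IsUnit k

/-- `G(Σ)`: the set of primitive lattice generators of the rays of the fan. -/
def gens {n : ℕ} (F : Set (Set (Vec n))) : Set (LVec n) :=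
  {v | IsPrimitive v ∧ coneGen {toQ v} ∈ F}

/-- A primitive collection of the fan `F`: a set `P` of ray generators such that
`P` does not generate a cone of `F`, but every proper subset obtained by removing
one element does. -/
def IsPrimCol {n : ℕ} (F : Set (Set (Vec n))) (P : Finset (LVec n)) : Prop :=
  ↑P ⊆ gens F ∧ coneGen (toQ '' ↑P) ∉ F ∧
    ∀ x ∈ P, coneGen (toQ '' ↑(P.erase x)) ∈ F

/-- `HasPrimRel F P Y a` : the sum of the elements of `P` lies in the relative
interior of the cone of `F` generated by `Y`, with (positive integral) coordinates
`a y` on the generators `y ∈ Y`; i.e. the primitive relation of `P` is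
`∑_{x ∈ P} x = ∑_{y ∈ Y} a y • y`. -/
def HasPrimRel {n : ℕ} (F : Set (Set (Vec n))) (P Y : Finset (LVec n))
    (a : LVec n → ℤ) : Prop :=
  ↑Y ⊆ gens F ∧ coneGen (toQ '' ↑Y) ∈ F ∧ (∀ y ∈ Y, 0 < a y) ∧
    ∑ x ∈ P, x = ∑ y ∈ Y, a y • y

/-- The degree of a primitive collection `P` with primitive relation data `(Y, a)`:
`deg P = |P| - ∑ a_y`. -/
def degOf {n : ℕ} (P Y : Finset (LVec n)) (a : LVec n → ℤ) : ℤ :=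
  (P.card : ℤ) - ∑ y ∈ Y, a y

/-- A fan is Fano if every primitive collection has strictly positive degree
(Batyrev's criterion). -/
def IsFano {n : ℕ} (F : Set (Set (Vec n))) : Prop :=
  ∀ P Y a, IsPrimCol F P → HasPrimRel F P Y a → 0 < degOf P Y a

/-- The star subdivision of the fan `F` at the cone generated by `T`, with new ray
generated by `x = ∑_{t ∈ T} t`: its cones are the cones of `F` not containing the
cone of `T`, together with the cones generated by `{x} ∪ A` where `A` runs over the
generator sets of those faces, not containing the cone of `T`, of the cones of `F`
containing the cone of `T`. -/
def starSubdiv {n : ℕ} (F : Set (Set (Vec n))) (T : Finset (LVec n)) :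
    Set (Set (Vec n)) :=
  {σ ∈ F | ¬ coneGen (toQ '' ↑T) ⊆ σ} ∪
  {ρ | ∃ A : Finset (LVec n), ↑A ⊆ gens F ∧
      (∃ σ ∈ F, coneGen (toQ '' ↑T) ⊆ σ ∧ IsFaceOf (coneGen (toQ '' (↑A : Set (LVec n)))) σ) ∧
      ¬ coneGen (toQ '' ↑T) ⊆ coneGen (toQ '' (↑A : Set (LVec n))) ∧
      ρ = coneGen (toQ '' ↑(insert (∑ t ∈ T, t) A : Finset (LVec n)))}

/-- `F'` is obtained from `F` by a star subdivision at a cone of `F` of dimension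
at least `2` (equivalently, the associated toric morphism is a blow-up along a
smooth invariant center). -/
def IsBlowup {n : ℕ} (F' F : Set (Set (Vec n))) : Prop :=
  ∃ T : Finset (LVec n), ↑T ⊆ gens F ∧ 2 ≤ T.card ∧
    coneGen (toQ '' ↑T) ∈ F ∧ F' = starSubdiv F T

/-- The fan `F'` refines the fan `F`: every cone of `F'` is contained in a cone
of `F`. -/
def Refines {n : ℕ} (F' F : Set (Set (Vec n))) : Prop :=
  ∀ σ' ∈ F', ∃ σ ∈ F, σ' ⊆ σ


/-! ## The explicit construction in `ℤ^4` -/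

/-- `e₁`, first standard basis vector of `ℤ^4`. -/
def e1 : LVec 4 := ![1, 0, 0, 0]
/-- `e₂`. -/
def e2 : LVec 4 := ![0, 1, 0, 0]
/-- `e₃`. -/
def e3 : LVec 4 := ![0, 0, 1, 0]
/-- `e₄`. -/
def e4 : LVec 4 := ![0, 0, 0, 1]
/-- `e₀ = -e₁ - e₂ - e₃ - e₄`. -/
def e0 : LVec 4 := ![-1, -1, -1, -1]
/-- `e₅ = e₁ + e₂ + e₃`. -/
def e5 : LVec 4 := ![1, 1, 1, 0]
/-- `e₆ = e₂ + e₃ + e₄`. -/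
def e6 : LVec 4 := ![0, 1, 1, 1]
/-- `e₇ = e₄ + e₅`. -/
def e7 : LVec 4 := ![1, 1, 1, 1]

/-- The fan of `ℙ^4`: its cones are generated by the proper subsets of
`{e₀, e₁, e₂, e₃, e₄}`. -/
def SigmaP4 : Set (Set (Vec 4)) :=
  {σ | ∃ S : Finset (LVec 4), S ⊂ ({e0, e1, e2, e3, e4} : Finset (LVec 4)) ∧
    σ = coneGen (toQ '' ↑S)}

/-- `Σ_X`: the fan of `ℙ^4` blown up along the line `V(⟨e₁,e₂,e₃⟩)`, i.e. the star
subdivision of `Σ_{ℙ^4}` at the cone generated by `{e₁,e₂,e₃}`, with new ray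
`e₅ = e₁ + e₂ + e₃`. -/
def SigmaX : Set (Set (Vec 4)) := starSubdiv SigmaP4 {e1, e2, e3}

/-- `Σ_W`: the star subdivision of `Σ_X` at the cone generated by `{e₂,e₃,e₄}`,
with new ray `e₆ = e₂ + e₃ + e₄`. -/
def SigmaW : Set (Set (Vec 4)) := starSubdiv SigmaX {e2, e3, e4}

/-- `Σ_Y`: the star subdivision of `Σ_W` at the cone generated by `{e₄,e₅}`,
with new ray `e₇ = e₄ + e₅`. -/
def SigmaY : Set (Set (Vec 4)) := starSubdiv SigmaW {e4, e5}

/-!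
Write `x = ∑ T`. As `T` is part of a lattice basis, `x` is primitive and no nonempty subset of
`T` sums to zero; as `|T| ≥ 2`, `x` is not a ray of `Σ'`. So the rays of `Σ_Y` are those of `Σ'`
together with `x`, and a finite search over `T ⊆ {e₀, …, e₇}` leaves five candidates.

If `x ∈ {e₅, e₆}`, look at the cone `⟨e₂, e₅, e₆, e₇⟩` of `Σ_Y`. It is not a cone of `Σ'`, whose
face `⟨x⟩` would then be a ray of `Σ'`; so it is `⟨x⟩ + ⟨A⟩` for a face `⟨A⟩` of a cone `σ` of
`Σ'` containing `T`, and since `e₅, e₆, e₇` span faces of it, the two of them other than `x` lie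
in `A`. Then `σ` has five rays. If `x = e₇`, two rays `p, q` of `Σ'` satisfy `p + q = ∑ T`: either
`⟨p, q⟩` is a cone of `Σ'` meeting `⟨T⟩` in a set that is not a face, or `{p, q}` is a primitive
collection of degree `2 - |T| ≤ 0`.
-/

section Cones

variable {n : ℕ}

theorem toQ_injective : Function.Injective (toQ (n := n)) := fun _ _ h =>
  funext fun i => by simpa [toQ] using congrFun h i

@[simp] theorem toQ_apply (v : LVec n) (i : Fin n) : toQ v i = (v i : ℚ) := rfl

theorem toQ_sum {ι : Type*} (S : Finset ι) (f : ι → LVec n) :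
    toQ (∑ i ∈ S, f i) = ∑ i ∈ S, toQ (f i) := by
  ext; simp [Finset.sum_apply]

theorem toQ_dotProduct_toQ (w v : LVec n) : toQ w ⬝ᵥ toQ v = ((w ⬝ᵥ v : ℤ) : ℚ) := by
  simp [dotProduct]

theorem toQ_dotProduct_sum_smul (w : LVec n) (S : Finset (LVec n)) (c : LVec n → ℚ) :
    toQ w ⬝ᵥ ∑ s ∈ S, c s • toQ s = ∑ s ∈ S, c s * (w ⬝ᵥ s : ℤ) := by
  simp [dotProduct_sum, toQ_dotProduct_toQ]

theorem mem_coneGen_iff {S : Finset (LVec n)} {x : Vec n} :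
    x ∈ coneGen (toQ '' ↑S) ↔
      ∃ c : LVec n → ℚ, (∀ s, 0 ≤ c s) ∧ x = ∑ s ∈ S, c s • toQ s := by
  constructor
  · rintro ⟨T, c, hT, hc, rfl⟩
    have hTS : T ⊆ S.image toQ := by simpa [← Finset.coe_subset] using hT
    refine ⟨fun s => if toQ s ∈ T then c (toQ s) else 0,
      fun s => by dsimp only; split_ifs <;> simp [hc], ?_⟩
    have hext : ∑ t ∈ T, c t • t = ∑ v ∈ S.image toQ, (if v ∈ T then c v else 0) • v := by
      rw [← Finset.sum_subset hTS fun v _ hv => by simp [hv]]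
      exact Finset.sum_congr rfl fun v hv => by simp [hv]
    rw [hext, Finset.sum_image fun a _ b _ h => toQ_injective h]
  · rintro ⟨c, hc, rfl⟩
    refine ⟨S.image toQ, Function.extend toQ c 0, by simp, fun v => ?_, ?_⟩
    · unfold Function.extend
      split_ifs
      exacts [hc _, le_rfl]
    · rw [Finset.sum_image fun a _ b _ h => toQ_injective h]
      simp [toQ_injective.extend_apply]

theorem toQ_mem_coneGen {S : Finset (LVec n)} {s : LVec n} (hs : s ∈ S) :
    toQ s ∈ coneGen (toQ '' ↑S) :=
  ⟨{toQ s}, fun _ => 1, by simpa using ⟨s, hs, rfl⟩, fun _ => zero_le_one, by simp⟩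

theorem toQ_sum_mem_coneGen (S : Finset (LVec n)) :
    toQ (∑ s ∈ S, s) ∈ coneGen (toQ '' ↑S) :=
  mem_coneGen_iff.mpr ⟨fun _ => 1, fun _ => zero_le_one, by simp [toQ_sum]⟩

theorem coneGen_mono {S S' : Set (Vec n)} (h : S ⊆ S') : coneGen S ⊆ coneGen S' := by
  rintro x ⟨T, c, hT, hc, rfl⟩
  exact ⟨T, c, hT.trans h, hc, rfl⟩

theorem smul_mem_coneGen {S : Set (Vec n)} {x : Vec n} (hx : x ∈ coneGen S) {c : ℚ}
    (hc : 0 ≤ c) : c • x ∈ coneGen S := by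
  obtain ⟨T, d, hT, hd, rfl⟩ := hx
  exact ⟨T, fun t => c * d t, hT, fun t => mul_nonneg hc (hd t),
    by simp [Finset.smul_sum, mul_smul]⟩

theorem mem_coneGen_singleton {v x : Vec n} :
    x ∈ coneGen {v} ↔ ∃ c : ℚ, 0 ≤ c ∧ x = c • v := by
  constructor
  · rintro ⟨T, d, hT, hd, rfl⟩
    refine ⟨∑ t ∈ T, d t, Finset.sum_nonneg fun t _ => hd t, ?_⟩
    rw [Finset.sum_smul]
    exact Finset.sum_congr rfl fun t ht => by rw [hT ht]
  · rintro ⟨c, hc, rfl⟩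
    exact ⟨{v}, fun _ => c, by simp, fun _ => hc, by simp⟩

theorem self_mem_coneGen_singleton (v : Vec n) : v ∈ coneGen {v} :=
  mem_coneGen_singleton.mpr ⟨1, zero_le_one, (one_smul ℚ v).symm⟩

theorem coneGen_toQ_singleton (v : LVec n) :
    coneGen (toQ '' (({v} : Finset (LVec n)) : Set (LVec n))) = coneGen {toQ v} := by
  simp

end Cones

section Primitive

variable {n : ℕ}

theorem isPrimitive_of_isUnit_repr {ι : Type*} (b : Module.Basis ι ℤ (LVec n)) {v : LVec n}
    {i : ι} (h : IsUnit (b.repr v i)) : IsPrimitive v := by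
  refine ⟨fun hv => by simp [hv] at h, fun k w hvw => ?_⟩
  rw [hvw, map_smul, Finsupp.smul_apply, smul_eq_mul] at h
  exact isUnit_of_mul_isUnit_left h

theorem isPrimitive_of_apply_eq_one_or {v : LVec n} {i : Fin n} (h : v i = 1 ∨ v i = -1) :
    IsPrimitive v :=
  isPrimitive_of_isUnit_repr (Pi.basisFun ℤ (Fin n)) (i := i)
    (by rw [Pi.basisFun_repr, Int.isUnit_iff]; exact h)

/-- From `d • a = m • b` with `u * d + v * m = 1`, both `a` and `b` are multiples of
`u • b + v • a`. -/
theorem IsPrimitive.eq_of_toQ_eq_smul {a b : LVec n} (ha : IsPrimitive a) (hb : IsPrimitive b)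
    {c : ℚ} (hc : 0 ≤ c) (h : toQ a = c • toQ b) : a = b := by
  have hda : (c.den : ℤ) • a = c.num • b := by
    ext i
    have hi := congrFun h i
    simp only [toQ_apply, Pi.smul_apply, smul_eq_mul] at hi
    have : ((c.den : ℤ) * a i : ℚ) = (c.num * b i : ℤ) := by
      push_cast; rw [hi, ← Rat.mul_den_eq_num]; ring
    exact_mod_cast this
  obtain ⟨u, v, huv⟩ : IsCoprime (c.den : ℤ) c.num := by
    rw [Int.isCoprime_iff_gcd_eq_one]; simpa [Int.gcd, Nat.coprime_comm] using c.reduced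
  set z := u • b + v • a
  have hbz : b = (c.den : ℤ) • z := by
    linear_combination (norm := module) (-v) • hda - huv • b
  have haz : a = c.num • z := by
    linear_combination (norm := module) u • hda - huv • a
  have hden : c.den = 1 := by
    simpa [Int.isUnit_iff] using hb.2 _ _ hbz
  have hnum : c.num = 1 := by
    have hpos : 0 ≤ c.num := Rat.num_nonneg.mpr hc
    rcases Int.isUnit_iff.mp (ha.2 _ _ haz) with h1 | h1 <;> omega
  rw [hbz, haz, hden, hnum, Nat.cast_one]

theorem IsPrimitive.eq_of_toQ_mem_ray {a b : LVec n} (ha : IsPrimitive a) (hb : IsPrimitive b)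
    (h : toQ a ∈ coneGen {toQ b}) : a = b := by
  obtain ⟨c, hc, h⟩ := mem_coneGen_singleton.mp h
  exact ha.eq_of_toQ_eq_smul hb hc h

theorem not_coneGen_subset_ray {T : Finset (LVec n)} (hT : ∀ t ∈ T, IsPrimitive t)
    (hcard : 2 ≤ T.card) {v : LVec n} (hv : IsPrimitive v) :
    ¬ coneGen (toQ '' ↑T) ⊆ coneGen {toQ v} := by
  intro hsub
  obtain ⟨t₁, ht₁, t₂, ht₂, hne⟩ := Finset.one_lt_card.mp hcard
  exact hne (((hT t₁ ht₁).eq_of_toQ_mem_ray hv (hsub (toQ_mem_coneGen ht₁))).trans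
    ((hT t₂ ht₂).eq_of_toQ_mem_ray hv (hsub (toQ_mem_coneGen ht₂))).symm)

end Primitive

section Faces

variable {n : ℕ}

theorem isFaceOf_refl (σ : Set (Vec n)) : IsFaceOf σ σ :=
  ⟨0, fun _ _ => le_rfl, by simp⟩

theorem IsFaceOf.toQ_mem_of_sum_mem {G : Set (Vec n)} {S : Finset (LVec n)}
    (hG : IsFaceOf G (coneGen (toQ '' ↑S))) {c : LVec n → ℚ} (hc : ∀ s, 0 ≤ c s)
    (hy : ∑ s ∈ S, c s • toQ s ∈ G) {s : LVec n} (hs : s ∈ S) (hcs : 0 < c s) :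
    toQ s ∈ G := by
  obtain ⟨u, hu, rfl⟩ := hG
  have hus : ∀ t ∈ S, 0 ≤ c t * u (toQ t) := fun t ht =>
    mul_nonneg (hc t) (hu _ (toQ_mem_coneGen ht))
  have hzero := (Finset.sum_eq_zero_iff_of_nonneg hus).mp (by simpa using hy.2) s hs
  exact ⟨toQ_mem_coneGen hs, (mul_eq_zero.mp hzero).resolve_left hcs.ne'⟩

theorem IsFaceOf.mem_of_toQ_mem {v : LVec n} {S : Finset (LVec n)}
    (hface : IsFaceOf (coneGen {toQ v}) (coneGen (toQ '' ↑S))) (hv : IsPrimitive v)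
    (hS : ∀ s ∈ S, IsPrimitive s) (hvS : toQ v ∈ coneGen (toQ '' ↑S)) : v ∈ S := by
  obtain ⟨c, hc, hvc⟩ := mem_coneGen_iff.mp hvS
  obtain ⟨s, hs, hcs⟩ : ∃ s ∈ S, c s • toQ s ≠ 0 := by
    refine Finset.exists_ne_zero_of_sum_ne_zero (hvc ▸ fun h => hv.1 ?_)
    exact funext fun i => by simpa using congrFun h i
  have hcpos : 0 < c s := (hc s).lt_of_ne (Ne.symm (left_ne_zero_of_smul hcs))
  have hsv := hface.toQ_mem_of_sum_mem hc (hvc ▸ self_mem_coneGen_singleton _) hs hcpos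
  exact (hS s hs).eq_of_toQ_mem_ray hv hsv ▸ hs

theorem toQ_notMem_coneGen_of_dot {S : Finset (LVec n)} {v : LVec n} (w : LVec n)
    (hS : ∀ s ∈ S, 0 ≤ w ⬝ᵥ s) (hv : w ⬝ᵥ v < 0) : toQ v ∉ coneGen (toQ '' ↑S) := by
  intro h
  obtain ⟨c, hc, hvc⟩ := mem_coneGen_iff.mp h
  have key := congrArg (toQ w ⬝ᵥ ·) hvc
  simp only [toQ_dotProduct_sum_smul, toQ_dotProduct_toQ] at key
  have : (0 : ℚ) ≤ ∑ s ∈ S, c s * (w ⬝ᵥ s : ℤ) :=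
    Finset.sum_nonneg fun s hs => mul_nonneg (hc s) (by exact_mod_cast hS s hs)
  have : ((w ⬝ᵥ v : ℤ) : ℚ) < 0 := by exact_mod_cast hv
  linarith

theorem not_coneGen_subset_of_dot {T S : Finset (LVec n)} {t : LVec n} (ht : t ∈ T)
    (w : LVec n) (hS : ∀ s ∈ S, 0 ≤ w ⬝ᵥ s) (hwt : w ⬝ᵥ t < 0) :
    ¬ coneGen (toQ '' ↑T) ⊆ coneGen (toQ '' (↑S : Set (LVec n))) :=
  fun h => toQ_notMem_coneGen_of_dot w hS hwt (h (toQ_mem_coneGen ht))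

theorem isFaceOf_coneGen_of_dot {S₀ S : Finset (LVec n)} (hsub : S₀ ⊆ S) (w : LVec n)
    (h₀ : ∀ s ∈ S₀, w ⬝ᵥ s = 0) (hpos : ∀ s ∈ S, s ∉ S₀ → 0 < w ⬝ᵥ s) :
    IsFaceOf (coneGen (toQ '' (↑S₀ : Set (LVec n))))
      (coneGen (toQ '' (↑S : Set (LVec n)))) := by
  have hnn : ∀ s ∈ S, (0 : ℚ) ≤ (w ⬝ᵥ s : ℤ) := fun s hs => by
    by_cases h : s ∈ S₀
    · simp [h₀ s h]
    · exact_mod_cast (hpos s hs h).le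
  refine ⟨dotProductEquiv ℚ (Fin n) (toQ w), ?_, ?_⟩
  · intro x hx
    obtain ⟨c, hc, rfl⟩ := mem_coneGen_iff.mp hx
    rw [dotProductEquiv_apply_apply, toQ_dotProduct_sum_smul]
    exact Finset.sum_nonneg fun s hs => mul_nonneg (hc s) (hnn s hs)
  ext x
  simp only [dotProductEquiv_apply_apply]
  constructor
  · intro hx
    refine ⟨coneGen_mono (Set.image_mono (Finset.coe_subset.mpr hsub)) hx, ?_⟩
    obtain ⟨c, -, rfl⟩ := mem_coneGen_iff.mp hx
    rw [toQ_dotProduct_sum_smul]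
    exact Finset.sum_eq_zero fun s hs => by simp [h₀ s hs]
  · rintro ⟨hx, hux⟩
    obtain ⟨c, hc, rfl⟩ := mem_coneGen_iff.mp hx
    rw [toQ_dotProduct_sum_smul] at hux
    have hterm := (Finset.sum_eq_zero_iff_of_nonneg fun s hs =>
      mul_nonneg (hc s) (hnn s hs)).mp hux
    refine mem_coneGen_iff.mpr ⟨c, hc, (Finset.sum_subset hsub fun s hs hs₀ => ?_).symm⟩
    have : c s = 0 := (mul_eq_zero.mp (hterm s hs)).resolve_right
      (by exact_mod_cast (hpos s hs hs₀).ne')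
    simp [this]

end Faces

namespace IsSmoothCompleteFan

variable {n : ℕ} {F : Set (Set (Vec n))}

theorem exists_basis (hF : IsSmoothCompleteFan F) {σ : Set (Vec n)} (hσ : σ ∈ F) :
    ∃ (b : Module.Basis (Fin n) ℤ (LVec n)) (I : Finset (Fin n)),
      σ = coneGen (toQ '' ↑(I.image b)) := by
  obtain ⟨b, I, rfl⟩ := hF.smooth σ hσ
  exact ⟨b, I, by rw [Finset.coe_image]⟩

theorem isPrimitive_basis {b : Module.Basis (Fin n) ℤ (LVec n)} {I : Finset (Fin n)} :
    ∀ s ∈ I.image b, IsPrimitive s := by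
  intro s hs
  obtain ⟨i, -, rfl⟩ := Finset.mem_image.mp hs
  exact isPrimitive_of_isUnit_repr b (i := i) (by simp)

theorem isFaceOf_ray (hF : IsSmoothCompleteFan F) {v : LVec n} (hv : coneGen {toQ v} ∈ F)
    {S : Finset (LVec n)} (hS : coneGen (toQ '' ↑S) ∈ F) (hvS : toQ v ∈ coneGen (toQ '' ↑S)) :
    IsFaceOf (coneGen {toQ v}) (coneGen (toQ '' ↑S)) := by
  have hsub : coneGen {toQ v} ⊆ coneGen (toQ '' ↑S) := fun x hx => by
    obtain ⟨c, hc, rfl⟩ := mem_coneGen_singleton.mp hx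
    exact smul_mem_coneGen hvS hc
  simpa [Set.inter_eq_self_of_subset_right hsub] using (hF.inter _ hS _ hv).1

theorem mem_of_toQ_mem_coneGen (hF : IsSmoothCompleteFan F) {S : Finset (LVec n)}
    (hS : coneGen (toQ '' ↑S) ∈ F) (hSprim : ∀ s ∈ S, IsPrimitive s) {v : LVec n}
    (hv : v ∈ gens F) (hvS : toQ v ∈ coneGen (toQ '' ↑S)) : v ∈ S :=
  (hF.isFaceOf_ray hv.2 hS hvS).mem_of_toQ_mem hv.1 hSprim hvS

theorem card_le (hF : IsSmoothCompleteFan F) {σ : Set (Vec n)} (hσ : σ ∈ F)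
    {S : Finset (LVec n)} (hS : ↑S ⊆ gens F) (hSσ : ∀ s ∈ S, toQ s ∈ σ) : S.card ≤ n := by
  obtain ⟨b, I, rfl⟩ := hF.exists_basis hσ
  have hSI : S ⊆ I.image b := fun s hs =>
    hF.mem_of_toQ_mem_coneGen hσ isPrimitive_basis (hS hs) (hSσ s hs)
  calc S.card ≤ (I.image b).card := Finset.card_le_card hSI
    _ ≤ I.card := Finset.card_image_le
    _ ≤ n := by simpa using I.card_le_univ

theorem isPrimitive_sum_of_subset (hF : IsSmoothCompleteFan F) {T : Finset (LVec n)}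
    (hTg : ↑T ⊆ gens F) (hT : coneGen (toQ '' ↑T) ∈ F) {S : Finset (LVec n)} (hST : S ⊆ T)
    (hS : S.Nonempty) : IsPrimitive (∑ s ∈ S, s) := by
  obtain ⟨b, I, hbI⟩ := hF.exists_basis hT
  have hTI : T ⊆ I.image b := fun t ht =>
    hF.mem_of_toQ_mem_coneGen (hbI ▸ hT) isPrimitive_basis (hTg ht)
      (hbI ▸ toQ_mem_coneGen ht)
  obtain ⟨s₀, hs₀⟩ := hS
  obtain ⟨i₀, -, rfl⟩ := Finset.mem_image.mp (hTI (hST hs₀))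
  refine isPrimitive_of_isUnit_repr b (i := i₀) ?_
  rw [map_sum, Finsupp.finsetSum_apply, Finset.sum_eq_single (b i₀)]
  · simp
  · intro s hs hne
    obtain ⟨j, -, rfl⟩ := Finset.mem_image.mp (hTI (hST hs))
    rw [b.repr_self, Finsupp.single_eq_of_ne fun h => hne (by rw [h])]
  · exact fun h => absurd hs₀ h

theorem isFaceOf_empty (hF : IsSmoothCompleteFan F) {σ : Set (Vec n)} (hσ : σ ∈ F) :
    IsFaceOf (coneGen (toQ '' ↑(∅ : Finset (LVec n)))) σ := by
  obtain ⟨b, I, rfl⟩ := hF.exists_basis hσ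
  set w := (dotProductEquiv ℤ (Fin n)).symm (∑ i ∈ I, b.coord i)
  have hw : ∀ v, w ⬝ᵥ v = ∑ i ∈ I, b.repr v i := fun v => by
    rw [← dotProductEquiv_apply_apply, LinearEquiv.apply_symm_apply]
    simp
  refine isFaceOf_coneGen_of_dot (Finset.empty_subset _) w (by simp) fun s hs _ => ?_
  obtain ⟨j, hj, rfl⟩ := Finset.mem_image.mp hs
  simp [hw, Finsupp.single_apply, hj]

theorem sum_notMem_gens (hF : IsSmoothCompleteFan F) {T : Finset (LVec n)} (hTg : ↑T ⊆ gens F)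
    (hT : coneGen (toQ '' ↑T) ∈ F) (hcard : 2 ≤ T.card) : ∑ t ∈ T, t ∉ gens F := by
  intro hx
  have hface := hF.isFaceOf_ray hx.2 hT (toQ_sum_mem_coneGen T)
  have hxT : ∑ t ∈ T, (1 : ℚ) • toQ t ∈ coneGen {toQ (∑ t ∈ T, t)} := by
    simpa [toQ_sum] using self_mem_coneGen_singleton (toQ (∑ t ∈ T, t))
  have heq : ∀ t ∈ T, t = ∑ t ∈ T, t := fun t ht => (hTg ht).1.eq_of_toQ_mem_ray hx.1
    (hface.toQ_mem_of_sum_mem (fun _ => zero_le_one) hxT ht one_pos)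
  obtain ⟨t₁, ht₁, t₂, ht₂, hne⟩ := Finset.one_lt_card.mp hcard
  exact hne ((heq t₁ ht₁).trans (heq t₂ ht₂).symm)

end IsSmoothCompleteFan

section StarSubdivision

variable {n : ℕ} {F : Set (Set (Vec n))} {T : Finset (LVec n)}

theorem gens_starSubdiv (hTprim : ∀ t ∈ T, IsPrimitive t) (hcard : 2 ≤ T.card)
    (hT : coneGen (toQ '' ↑T) ∈ F)
    (h₀ : IsFaceOf (coneGen (toQ '' ↑(∅ : Finset (LVec n))))
      (coneGen (toQ '' (↑T : Set (LVec n)))))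
    (hx : IsPrimitive (∑ t ∈ T, t)) :
    gens (starSubdiv F T) = insert (∑ t ∈ T, t) (gens F) := by
  ext v
  constructor
  · rintro ⟨hv, ⟨hvF, -⟩ | ⟨A, -, -, -, hvA⟩⟩
    · exact Or.inr ⟨hv, hvF⟩
    · exact Or.inl (hx.eq_of_toQ_mem_ray hv
        (hvA ▸ toQ_mem_coneGen (Finset.mem_insert_self _ _))).symm
  · rintro (rfl | ⟨hv, hvF⟩)
    · refine ⟨hx, Or.inr ⟨∅, by simp, ⟨_, hT, subset_rfl, h₀⟩, fun h => ?_, by simp⟩⟩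
      exact not_coneGen_subset_ray hTprim hcard hx (h.trans (coneGen_mono (by simp)))
    · exact ⟨hv, Or.inl ⟨hvF, not_coneGen_subset_ray hTprim hcard hv⟩⟩

theorem coneGen_mem_starSubdiv_of_dot {A S C : Finset (LVec n)} (hA : ↑A ⊆ gens F)
    (hS : coneGen (toQ '' ↑S) ∈ F) (hTS : T ⊆ S) (hAS : A ⊆ S) (hTA : ¬ T ⊆ A) (w : LVec n)
    (hwA : ∀ a ∈ A, w ⬝ᵥ a = 0) (hwS : ∀ s ∈ S, s ∉ A → 0 < w ⬝ᵥ s)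
    (hC : insert (∑ t ∈ T, t) A = C) : coneGen (toQ '' ↑C) ∈ starSubdiv F T := by
  obtain ⟨t, htT, htA⟩ := Finset.not_subset.mp hTA
  refine Or.inr ⟨A, hA, ⟨_, hS, coneGen_mono (Set.image_mono (Finset.coe_subset.mpr hTS)),
    isFaceOf_coneGen_of_dot hAS w hwA hwS⟩, ?_, by rw [hC]⟩
  exact not_coneGen_subset_of_dot htT (-w) (fun a ha => by simp [neg_dotProduct, hwA a ha])
    (by simpa [neg_dotProduct] using hwS t (hTS htT) htA)

theorem IsSmoothCompleteFan.gens_starSubdiv (hF : IsSmoothCompleteFan F) (hTg : ↑T ⊆ gens F)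
    (hcard : 2 ≤ T.card) (hT : coneGen (toQ '' ↑T) ∈ F) :
    gens (starSubdiv F T) = insert (∑ t ∈ T, t) (gens F) :=
  _root_.gens_starSubdiv (fun t ht => (hTg ht).1) hcard hT (hF.isFaceOf_empty hT)
    (hF.isPrimitive_sum_of_subset hTg hT subset_rfl (Finset.card_pos.mp (by omega)))

theorem card_le_of_coneGen_mem_starSubdiv (hF : IsSmoothCompleteFan F) (hTg : ↑T ⊆ gens F)
    (hcard : 2 ≤ T.card) (hT : coneGen (toQ '' ↑T) ∈ F) {C S : Finset (LVec n)}
    (hC : coneGen (toQ '' ↑C) ∈ starSubdiv F T) (hSC : S ⊆ C) (hxS : ∑ t ∈ T, t ∈ S)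
    (hSprim : ∀ s ∈ S, IsPrimitive s)
    (hface : ∀ s ∈ S, IsFaceOf (coneGen {toQ s}) (coneGen (toQ '' ↑C))) :
    (T ∪ S.erase (∑ t ∈ T, t)).card ≤ n := by
  have hx := hF.isPrimitive_sum_of_subset hTg hT subset_rfl (Finset.card_pos.mp (by omega))
  rcases hC with ⟨hCF, -⟩ | ⟨A, hA, ⟨σ, hσ, hTσ, hAσ⟩, -, hCA⟩
  · exact (hF.sum_notMem_gens hTg hT hcard ⟨hx, hF.faces _ hCF _ (hface _ hxS)⟩).elim
  have hSA : S.erase (∑ t ∈ T, t) ⊆ A := by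
    intro s hs
    obtain ⟨hsx, hs⟩ := Finset.mem_erase.mp hs
    have hprim : ∀ g ∈ insert (∑ t ∈ T, t) A, IsPrimitive g := by
      simpa using ⟨hx, fun a ha => (hA ha).1⟩
    have hsA := (hCA ▸ hface s hs).mem_of_toQ_mem (hSprim s hs) hprim
      (hCA ▸ toQ_mem_coneGen (hSC hs))
    exact (Finset.mem_insert.mp hsA).resolve_left hsx
  have hAσ' : coneGen (toQ '' ↑A) ⊆ σ := by
    obtain ⟨u, -, hu⟩ := hAσ
    exact hu ▸ fun z hz => hz.1
  refine hF.card_le hσ (fun s hs => ?_) fun s hs => ?_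
  · rcases Finset.mem_union.mp hs with hs | hs
    exacts [hTg hs, hA (hSA hs)]
  · rcases Finset.mem_union.mp hs with hs | hs
    exacts [hTσ (toQ_mem_coneGen hs), hAσ' (toQ_mem_coneGen (hSA hs))]

theorem not_isFano_of_add_eq_sum (hF : IsSmoothCompleteFan F) {p q : LVec n} (hpq : p ≠ q)
    (hp : p ∈ gens F) (hq : q ∈ gens F) {Y : Finset (LVec n)} (hYg : ↑Y ⊆ gens F)
    (hY : coneGen (toQ '' ↑Y) ∈ F) (hcard : 2 ≤ Y.card) (hsum : p + q = ∑ y ∈ Y, y)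
    {w : LVec n} (hwY : w ∈ Y) (hw : toQ w ∉ coneGen (toQ '' ↑({p, q} : Finset (LVec n)))) :
    ¬ IsFano F := by
  intro hFano
  by_cases hpqF : coneGen (toQ '' ↑({p, q} : Finset (LVec n))) ∈ F
  · have hpqY : ∑ y ∈ Y, (1 : ℚ) • toQ y ∈
        coneGen (toQ '' ↑Y) ∩ coneGen (toQ '' ↑({p, q} : Finset (LVec n))) := by
      have h : ∑ y ∈ Y, (1 : ℚ) • toQ y = toQ (p + q) := by simp [hsum, toQ_sum]
      rw [h]
      refine ⟨by rw [hsum]; exact toQ_sum_mem_coneGen Y, ?_⟩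
      simpa [Finset.sum_pair hpq] using toQ_sum_mem_coneGen ({p, q} : Finset (LVec n))
    exact hw ((hF.inter _ hY _ hpqF).1.toQ_mem_of_sum_mem (fun _ => zero_le_one) hpqY hwY
      one_pos).2
  · have hP : IsPrimCol F {p, q} := by
      refine ⟨by simpa [Set.insert_subset_iff] using ⟨hp, hq⟩, hpqF, fun x hx => ?_⟩
      rcases Finset.mem_insert.mp hx with rfl | hx
      · simpa [Finset.erase_insert, hpq] using hq.2
      · rw [Finset.mem_singleton.mp hx, Finset.pair_comm]
        simpa [Finset.erase_insert, hpq.symm] using hp.2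
    have := hFano _ _ (fun _ => 1) hP
      ⟨hYg, hY, fun _ _ => one_pos, by simpa [Finset.sum_pair hpq] using hsum⟩
    rw [degOf, Finset.card_pair hpq] at this
    simp only [Finset.sum_const, Int.nsmul_eq_mul, mul_one] at this
    omega

end StarSubdivision

section SigmaY

def raysY : Finset (LVec 4) := {e0, e1, e2, e3, e4, e5, e6, e7}

theorem isPrimitive_of_subset_raysY {S : Finset (LVec 4)} (hS : S ⊆ raysY) :
    ∀ s ∈ S, IsPrimitive s := by
  have h : ∀ v ∈ raysY, ∃ i, v i = 1 ∨ v i = -1 := by decide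
  intro s hs
  obtain ⟨i, hi⟩ := h s (hS hs)
  exact isPrimitive_of_apply_eq_one_or hi

theorem gens_starSubdiv_of_dot {F : Set (Set (Vec 4))} {T G G' : Finset (LVec 4)}
    (hG : gens F = ↑G) (hTF : coneGen (toQ '' ↑T) ∈ F) (hT : insert (∑ t ∈ T, t) T ⊆ raysY)
    (hcard : 2 ≤ T.card) (w : LVec 4) (hw : ∀ t ∈ T, 0 < w ⬝ᵥ t)
    (hG' : insert (∑ t ∈ T, t) G = G') : gens (starSubdiv F T) = ↑G' := by
  have hprim := isPrimitive_of_subset_raysY hT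
  rw [gens_starSubdiv (fun t ht => hprim t (Finset.mem_insert_of_mem ht)) hcard hTF
    (isFaceOf_coneGen_of_dot (Finset.empty_subset _) w (by simp) fun t ht _ => hw t ht)
    (hprim _ (Finset.mem_insert_self _ _)), hG, ← hG', Finset.coe_insert]

theorem coneGen_mem_sigmaP4 {S : Finset (LVec 4)} (hS : S ⊂ {e0, e1, e2, e3, e4}) :
    coneGen (toQ '' ↑S) ∈ SigmaP4 :=
  ⟨S, hS, rfl⟩

theorem gens_sigmaP4 : gens SigmaP4 = ↑({e0, e1, e2, e3, e4} : Finset (LVec 4)) := by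
  have hprim := isPrimitive_of_subset_raysY (S := {e0, e1, e2, e3, e4}) (by decide)
  ext v
  constructor
  · rintro ⟨hv, S, hS, hvS⟩
    have hface : IsFaceOf (coneGen {toQ v}) (coneGen (toQ '' ↑S)) := hvS ▸ isFaceOf_refl _
    exact hS.1 (hface.mem_of_toQ_mem hv (fun s hs => hprim s (hS.1 hs))
      (hvS ▸ self_mem_coneGen_singleton _))
  · intro hv
    have hsub : ∀ v ∈ ({e0, e1, e2, e3, e4} : Finset (LVec 4)),
        {v} ⊂ ({e0, e1, e2, e3, e4} : Finset (LVec 4)) := by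
      decide
    exact ⟨hprim v hv, {v}, hsub v hv, (coneGen_toQ_singleton v).symm⟩

theorem gens_sigmaX : gens SigmaX = ↑({e0, e1, e2, e3, e4, e5} : Finset (LVec 4)) :=
  gens_starSubdiv_of_dot gens_sigmaP4 (coneGen_mem_sigmaP4 (by decide)) (by decide) (by decide)
    ![1, 1, 1, 0] (by decide) (by decide)

theorem coneGen_e2345_mem_sigmaX :
    coneGen (toQ '' ↑({e2, e3, e4, e5} : Finset (LVec 4))) ∈ SigmaX :=
  coneGen_mem_starSubdiv_of_dot (A := {e2, e3, e4}) (S := {e1, e2, e3, e4})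
    (by rw [gens_sigmaP4]; exact Finset.coe_subset.mpr (by decide))
    (coneGen_mem_sigmaP4 (by decide)) (by decide) (by decide) (by decide) ![1, 0, 0, 0]
    (by decide) (by decide) (by decide)

theorem coneGen_e45_mem_sigmaX : coneGen (toQ '' ↑({e4, e5} : Finset (LVec 4))) ∈ SigmaX :=
  coneGen_mem_starSubdiv_of_dot (A := {e4}) (S := {e1, e2, e3, e4})
    (by rw [gens_sigmaP4]; exact Finset.coe_subset.mpr (by decide))
    (coneGen_mem_sigmaP4 (by decide)) (by decide) (by decide) (by decide) ![1, 1, 1, 0]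
    (by decide) (by decide) (by decide)

theorem coneGen_e234_mem_sigmaX :
    coneGen (toQ '' ↑({e2, e3, e4} : Finset (LVec 4))) ∈ SigmaX :=
  Or.inl ⟨coneGen_mem_sigmaP4 (by decide),
    not_coneGen_subset_of_dot (t := e1) (by decide) ![-1, 0, 0, 0] (by decide) (by decide)⟩

theorem gens_sigmaW : gens SigmaW = ↑({e0, e1, e2, e3, e4, e5, e6} : Finset (LVec 4)) :=
  gens_starSubdiv_of_dot gens_sigmaX coneGen_e234_mem_sigmaX (by decide) (by decide)
    ![0, 1, 1, 1] (by decide) (by decide)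

theorem coneGen_e2456_mem_sigmaW :
    coneGen (toQ '' ↑({e2, e4, e5, e6} : Finset (LVec 4))) ∈ SigmaW :=
  coneGen_mem_starSubdiv_of_dot (A := {e2, e4, e5}) (S := {e2, e3, e4, e5})
    (by rw [gens_sigmaX]; exact Finset.coe_subset.mpr (by decide)) coneGen_e2345_mem_sigmaX
    (by decide) (by decide) (by decide) ![-1, 0, 1, 0] (by decide) (by decide) (by decide)

theorem coneGen_e45_mem_sigmaW : coneGen (toQ '' ↑({e4, e5} : Finset (LVec 4))) ∈ SigmaW :=
  Or.inl ⟨coneGen_e45_mem_sigmaX,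
    not_coneGen_subset_of_dot (t := e2) (by decide) ![1, -1, 0, 0] (by decide) (by decide)⟩

theorem gens_sigmaY : gens SigmaY = ↑raysY :=
  gens_starSubdiv_of_dot gens_sigmaW coneGen_e45_mem_sigmaW (by decide) (by decide)
    ![1, 0, 0, 1] (by decide) (by decide)

theorem coneGen_e2567_mem_sigmaY :
    coneGen (toQ '' ↑({e2, e5, e6, e7} : Finset (LVec 4))) ∈ SigmaY :=
  coneGen_mem_starSubdiv_of_dot (A := {e2, e5, e6}) (S := {e2, e4, e5, e6})
    (by rw [gens_sigmaW]; exact Finset.coe_subset.mpr (by decide)) coneGen_e2456_mem_sigmaW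
    (by decide) (by decide) (by decide) ![1, 0, -1, 1] (by decide) (by decide) (by decide)

theorem isFaceOf_ray_coneGen_e2567 : ∀ s ∈ ({e5, e6, e7} : Finset (LVec 4)),
    IsFaceOf (coneGen {toQ s}) (coneGen (toQ '' ↑({e2, e5, e6, e7} : Finset (LVec 4)))) := by
  have key : ∀ s w : LVec 4, s ∈ ({e2, e5, e6, e7} : Finset (LVec 4)) → w ⬝ᵥ s = 0 →
      (∀ t ∈ ({e2, e5, e6, e7} : Finset (LVec 4)), t ∉ ({s} : Finset (LVec 4)) →
        0 < w ⬝ᵥ t) →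
      IsFaceOf (coneGen {toQ s}) (coneGen (toQ '' ↑({e2, e5, e6, e7} : Finset (LVec 4)))) :=
    fun s w hs h₀ hpos => coneGen_toQ_singleton s ▸
      isFaceOf_coneGen_of_dot (Finset.singleton_subset_iff.mpr hs) w (by simpa using h₀) hpos
  simp only [Finset.mem_insert, Finset.mem_singleton]
  rintro s (rfl | rfl | rfl)
  · exact key _ ![0, 1, -1, 1] (by decide) (by decide) (by decide)
  · exact key _ ![1, 1, -1, 0] (by decide) (by decide) (by decide)
  · exact key _ ![-1, 1, 1, -1] (by decide) (by decide) (by decide)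

set_option maxRecDepth 100000 in
theorem blowup_center_cases : ∀ T ⊆ raysY, 2 ≤ T.card → ∑ t ∈ T, t ∈ raysY →
    (∀ S ⊆ T, S.Nonempty → ∑ s ∈ S, s ≠ 0) →
    T = {e1, e2, e3} ∨ T = {e2, e3, e4} ∨ T = {e4, e5} ∨ T = {e1, e6} ∨
      T = {e1, e2, e3, e4} := by
  decide

end SigmaY

/-- The toric Fano 4-fold `Y` associated to `Σ_Y` does not admit any equivariant
blow-down to a nonsingular toric Fano 4-fold: there is no smooth complete Fano fan
`Σ'` in `ℤ^4` and cone `τ` of `Σ'` of dimension at least 2 such that `Σ_Y` is the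
star subdivision of `Σ'` at `τ`. -/
theorem sigmaY_no_fano_blowdown :
    ¬ ∃ (F : Set (Set (Vec 4))) (T : Finset (LVec 4)),
      IsSmoothCompleteFan F ∧ IsFano F ∧ (↑T : Set (LVec 4)) ⊆ gens F ∧
      2 ≤ T.card ∧ coneGen (toQ '' ↑T) ∈ F ∧ SigmaY = starSubdiv F T := by
  rintro ⟨F, T, hF, hFano, hTg, hcard, hT, hY⟩
  have hmem : ∀ v, v ∈ raysY ↔ v = ∑ t ∈ T, t ∨ v ∈ gens F := fun v => by
    rw [← Finset.mem_coe, ← gens_sigmaY, hY, hF.gens_starSubdiv hTg hcard hT,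
      Set.mem_insert_iff]
  have hnew : ∑ t ∈ T, t ∈ ({e5, e6, e7} : Finset (LVec 4)) →
      (T ∪ ({e5, e6, e7} : Finset (LVec 4)).erase (∑ t ∈ T, t)).card ≤ 4 := fun hxS =>
    card_le_of_coneGen_mem_starSubdiv hF hTg hcard hT (hY ▸ coneGen_e2567_mem_sigmaY)
      (by decide) hxS (isPrimitive_of_subset_raysY (by decide)) isFaceOf_ray_coneGen_e2567
  have hrel : ∀ p q w : LVec 4, (p ∈ raysY ∧ q ∈ raysY ∧ p ≠ q ∧ p ≠ ∑ t ∈ T, t ∧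
      q ≠ ∑ t ∈ T, t ∧ p + q = ∑ t ∈ T, t ∧ w ∈ T) →
      toQ w ∉ coneGen (toQ '' ↑({p, q} : Finset (LVec 4))) → False := by
    rintro p q w ⟨hp, hq, hpq, hpx, hqx, hsum, hw⟩ hwpq
    exact not_isFano_of_add_eq_sum hF hpq (((hmem p).mp hp).resolve_left hpx)
      (((hmem q).mp hq).resolve_left hqx) hTg hT hcard hsum hw hwpq hFano
  rcases blowup_center_cases T (fun t ht => (hmem t).mpr (Or.inr (hTg ht))) hcard
    ((hmem _).mpr (Or.inl rfl)) fun S hS hSne => (hF.isPrimitive_sum_of_subset hTg hT hS hSne).1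
    with rfl | rfl | rfl | rfl | rfl
  · exact absurd (hnew (by decide)) (by decide)
  · exact absurd (hnew (by decide)) (by decide)
  · exact hrel e1 e6 e4 (by decide)
      (toQ_notMem_coneGen_of_dot ![0, 1, 0, -1] (by decide) (by decide))
  · exact hrel e4 e5 e1 (by decide)
      (toQ_notMem_coneGen_of_dot ![-1, 1, 0, 0] (by decide) (by decide))
  · exact hrel e4 e5 e1 (by decide)
      (toQ_notMem_coneGen_of_dot ![-1, 1, 0, 0] (by decide) (by decide))
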